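/- arXiv:2312.15096 — 2 statements merged into one kernel-verified Lean document; each statement's English description precedes it below -/
import Mathlib

section
/- Let C be an unfinished connected nonnegative configuration with at least two cubes such that no non-cut subpillar of C satisfies any of conditions (a)–(e) and C admits no move of type (f). If H is a high component of C such that C∖H is connected, then every pillar of H is a non-cut subpillar of C (that is, G_{C∖P} is connected for every pillar P of H). -/
/-- A cube is a point of `ℤ³`. -/
abbrev Cube : Type := ℤ × ℤ × ℤ

/-- Two cubes are adjacent if they lie at `L1`-distance `1`. -/
def cubeAdj (a b : Cube) : Prop :=
  (a.1 - b.1).natAbs + (a.2.1 - b.2.1).natAbs + (a.2.2 - b.2.2).natAbs = 1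

lemma cubeAdj_symm {a b : Cube} (h : cubeAdj a b) : cubeAdj b a := by
  unfold cubeAdj at h ⊢
  omega

lemma cubeAdj_irrefl (a : Cube) : ¬ cubeAdj a a := by
  unfold cubeAdj; simp

/-- The graph `G_S` on a set of cubes `S`, connecting adjacent cubes of `S`. -/
def gph (S : Finset Cube) : SimpleGraph Cube where
  Adj a b := a ∈ S ∧ b ∈ S ∧ cubeAdj a b
  symm := by
    constructor
    rintro a b ⟨ha, hb, h⟩
    exact ⟨hb, ha, cubeAdj_symm h⟩
  loopless := by
    constructor
    rintro a ⟨-, -, h⟩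
    exact cubeAdj_irrefl a h

/-- A set of cubes is connected if it is nonempty and all its cubes are joined by
paths of adjacent cubes inside the set. -/
def Conn (S : Finset Cube) : Prop :=
  S.Nonempty ∧ ∀ a ∈ S, ∀ b ∈ S, (gph S).Reachable a b

/-- Connected or empty. -/
def ConnOrEmpty (S : Finset Cube) : Prop := S = ∅ ∨ Conn S

/-- A configuration is nonnegative if all coordinates of all its cubes are `≥ 0`. -/
def Nonneg (C : Finset Cube) : Prop := ∀ c ∈ C, 0 ≤ c.1 ∧ 0 ≤ c.2.1 ∧ 0 ≤ c.2.2

/-- `Sq4 p q r s` : the four points form a 4-cycle `p-q-r-s-p` in the unit-distance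
graph on `ℤ³`. -/
def Sq4 (p q r s : Cube) : Prop :=
  cubeAdj p q ∧ cubeAdj q r ∧ cubeAdj r s ∧ cubeAdj s p ∧ p ≠ r ∧ q ≠ s

/-- Slide: there is a 4-cycle `c, c', r, s` with exactly the three vertices
other than `c'` in `C` (and `c` adjacent to `c'`). -/
def IsSlide (C : Finset Cube) (c c' : Cube) : Prop :=
  c ∈ C ∧ c' ∉ C ∧ ∃ r s, Sq4 c c' r s ∧ r ∈ C ∧ s ∈ C

/-- Convex transition: there is a 4-cycle `c, q, c', s` with exactly two
(adjacent) vertices in `C`, one of them `c`, and `c'` opposite to `c`. -/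
def IsConvexTrans (C : Finset Cube) (c c' : Cube) : Prop :=
  c ∈ C ∧ c' ∉ C ∧ ∃ q s, Sq4 c q c' s ∧ ((q ∈ C ∧ s ∉ C) ∨ (s ∈ C ∧ q ∉ C))

/-- A move replaces `c ∈ C` by `c' ∉ C` via a slide or a convex transition,
such that `C \ {c}` is connected. -/
def IsMoveVia (C : Finset Cube) (c c' : Cube) : Prop :=
  (IsSlide C c c' ∨ IsConvexTrans C c c') ∧ Conn (C.erase c)

/-- `C'` is obtained from `C` by a single move. -/
def MoveStep (C C' : Finset Cube) : Prop :=
  ∃ c c', IsMoveVia C c c' ∧ C' = insert c' (C.erase c)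

/-- `MoveSeq C m C'` : a sequence of `m` moves from `C` to `C'`, each resulting in a
connected configuration. -/
def MoveSeq (C : Finset Cube) (m : ℕ) (C' : Finset Cube) : Prop :=
  ∃ f : ℕ → Finset Cube, f 0 = C ∧ f m = C' ∧
    ∀ i < m, MoveStep (f i) (f (i + 1)) ∧ Conn (f (i + 1))

/-- Sum of `x`-coordinates of `C`. -/
def Xsum (C : Finset Cube) : ℤ := ∑ c ∈ C, c.1

/-- Sum of `y`-coordinates of `C`. -/
def Ysum (C : Finset Cube) : ℤ := ∑ c ∈ C, c.2.1

/-- Sum of `z`-coordinates of `C`. -/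
def Zsum (C : Finset Cube) : ℤ := ∑ c ∈ C, c.2.2

/-- A cube `c` is finished in `C` if the whole box spanned by the origin and `c`
is contained in `C`. -/
def FinishedCube (C : Finset Cube) (c : Cube) : Prop :=
  ∀ p : Cube, 0 ≤ p.1 → p.1 ≤ c.1 → 0 ≤ p.2.1 → p.2.1 ≤ c.2.1 →
    0 ≤ p.2.2 → p.2.2 ≤ c.2.2 → p ∈ C

/-- A finished configuration: nonnegative and all cubes finished. -/
def FinishedConfig (C : Finset Cube) : Prop :=
  Nonneg C ∧ ∀ c ∈ C, FinishedCube C c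

/-- The weight of a cube. -/
def weight (c : Cube) : ℤ :=
  if 1 < c.2.2 then 5
  else if c.2.2 = 1 then 4
  else if 1 < c.2.1 then 3
  else if c.2.1 = 1 then 2
  else 1

/-- The potential of a cube `(x, y, z)` is `w • (x + 2y + 4z)`. -/
def pot (c : Cube) : ℤ := weight c * (c.1 + 2 * c.2.1 + 4 * c.2.2)

/-- The potential of a configuration. -/
def Pot (C : Finset Cube) : ℤ := ∑ c ∈ C, pot c

/-- `SafeSeq C K` : `C` admits a sequence of `m ≥ 1` moves, each resulting in a connected
configuration, ending in a nonnegative configuration `C'` of strictly smaller potential,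
with `m ≤ K • (Π_C - Π_{C'})`. -/
def SafeSeq (C : Finset Cube) (K : ℕ) : Prop :=
  ∃ (m : ℕ) (C' : Finset Cube), 1 ≤ m ∧ MoveSeq C m C' ∧ Nonneg C' ∧
    Pot C' < Pot C ∧ (m : ℤ) ≤ (K : ℤ) * (Pot C - Pot C')

/-- The set of cubes `{x} × {y} × {z_b, …, z_t}`. -/
noncomputable def pillarSet (x y zb zt : ℤ) : Finset Cube :=
  (Finset.Icc zb zt).image fun z => (x, y, z)

/-- `P(x,y,z_b,z_t)` is a subpillar of `S`. -/
def IsSubpillar (S : Finset Cube) (x y zb zt : ℤ) : Prop :=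
  zb ≤ zt ∧ pillarSet x y zb zt ⊆ S

/-- A pillar of `S`: a maximal subpillar. -/
def IsPillar (S : Finset Cube) (x y zb zt : ℤ) : Prop :=
  IsSubpillar S x y zb zt ∧ (x, y, zb - 1) ∉ S ∧ (x, y, zt + 1) ∉ S

/-- `(x', y')` is one of the four sides of the column `(x, y)`. -/
def IsSide (x y x' y' : ℤ) : Prop :=
  (x' = x - 1 ∧ y' = y) ∨ (x' = x + 1 ∧ y' = y) ∨
  (x' = x ∧ y' = y - 1) ∨ (x' = x ∧ y' = y + 1)

/-- `P'(x',y',z'_b,z'_t)` is a pillar of `C` lying on a side of `P(x,y,z_b,z_t)`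
and adjacent to it. -/
def AdjPillar (C : Finset Cube) (x y zb zt x' y' z'b z't : ℤ) : Prop :=
  IsPillar C x' y' z'b z't ∧ IsSide x y x' y' ∧ z'b ≤ zt ∧ zb ≤ z't

/-- A cut cube of `C`: a cube whose removal disconnects `C`. -/
def IsCutCube (C : Finset Cube) (c : Cube) : Prop :=
  c ∈ C ∧ ¬ Conn (C.erase c)

/-- Condition (a): on some side the topmost adjacent pillar
`P'` satisfies `z'_t ≤ z_t - 2`. -/
def CondA (C : Finset Cube) (x y zb zt : ℤ) : Prop :=
  ∃ x' y' z'b z't, AdjPillar C x y zb zt x' y' z'b z't ∧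
    (∀ z''b z''t, AdjPillar C x y zb zt x' y' z''b z''t → z''t ≤ z't) ∧
    z't ≤ zt - 2

/-- Condition (b): some adjacent pillar `P'` has `z'_b > z_b` and
`(x, y, z'_b - 1)` is not a cut cube of `C`. -/
def CondB (C : Finset Cube) (x y zb zt : ℤ) : Prop :=
  ∃ x' y' z'b z't, AdjPillar C x y zb zt x' y' z'b z't ∧ zb < z'b ∧
    ¬ IsCutCube C (x, y, z'b - 1)

/-- Condition (c): `(x, y, z_b - 1) ∉ C` and some adjacent pillar has `z'_b < z_b`. -/
def CondC (C : Finset Cube) (x y zb zt : ℤ) : Prop :=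
  (x, y, zb - 1) ∉ C ∧
  ∃ x' y' z'b z't, AdjPillar C x y zb zt x' y' z'b z't ∧ z'b < zb

/-- Condition (d): `(x, y, z_b - 1) ∉ C` and on some side the bottommost adjacent
pillar `P'` satisfies `z'_b = z_b > 0`. -/
def CondD (C : Finset Cube) (x y zb zt : ℤ) : Prop :=
  (x, y, zb - 1) ∉ C ∧
  ∃ x' y' z'b z't, AdjPillar C x y zb zt x' y' z'b z't ∧
    (∀ z''b z''t, AdjPillar C x y zb zt x' y' z''b z''t → z'b ≤ z''b) ∧
    z'b = zb ∧ 0 < zb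

/-- Condition (e): at most one adjacent pillar on each side; there is an adjacent
pillar `P'` with `z'_b > z_b`, minimal such; and some other side `(x'', y'')` has
`(x'', y'', z_b) ∉ C`. -/
def CondE (C : Finset Cube) (x y zb zt : ℤ) : Prop :=
  (∀ x' y' z'b z't z''b z''t, AdjPillar C x y zb zt x' y' z'b z't →
      AdjPillar C x y zb zt x' y' z''b z''t → z'b = z''b ∧ z't = z''t) ∧
  ∃ x' y' z'b z't, AdjPillar C x y zb zt x' y' z'b z't ∧ zb < z'b ∧
    (∀ x'' y'' z''b z''t, AdjPillar C x y zb zt x'' y'' z''b z''t →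
      zb < z''b → z'b ≤ z''b) ∧
    ∃ x'' y'', IsSide x y x'' y'' ∧ (x'', y'') ≠ (x', y') ∧ (x'', y'', zb) ∉ C

/-- No non-cut subpillar of `C` satisfies any of the conditions (a)--(e). -/
def NoCondAE (C : Finset Cube) : Prop :=
  ∀ x y zb zt, IsSubpillar C x y zb zt →
    ConnOrEmpty (C \ pillarSet x y zb zt) →
    ¬ (CondA C x y zb zt ∨ CondB C x y zb zt ∨ CondC C x y zb zt ∨
       CondD C x y zb zt ∨ CondE C x y zb zt)

/-- Two sets of cubes are adjacent if some cube of one is adjacent to a cube of the other. -/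
def AdjSets (S T : Finset Cube) : Prop := ∃ a ∈ S, ∃ b ∈ T, cubeAdj a b

/-- The cubes of `C` with `z > 0`. -/
def Cpos (C : Finset Cube) : Finset Cube := C.filter fun c => 0 < c.2.2

/-- The cubes of `C` with `z = 0`. -/
def Czero (C : Finset Cube) : Finset Cube := C.filter fun c => c.2.2 = 0

/-- `H` is a connected component of `G_S`: nonempty, connected and closed under
adjacency within `S`. -/
def IsCompOf (S H : Finset Cube) : Prop :=
  H ⊆ S ∧ Conn H ∧ ∀ a ∈ H, ∀ b ∈ S, cubeAdj a b → b ∈ H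

/-- A high component of `C`: a connected component of `G_{C_{>0}}`. -/
def IsHighComp (C H : Finset Cube) : Prop := IsCompOf (Cpos C) H

/-- A low component of `C`: a connected component of `G_{C_0}`. -/
def IsLowComp (C L : Finset Cube) : Prop := IsCompOf (Czero C) L

/-- A move of type (f): it moves a cube with `z > 0`, strictly decreases the
potential, and results in a nonnegative configuration. -/
def MoveTypeF (C : Finset Cube) : Prop :=
  ∃ c c', IsMoveVia C c c' ∧ 0 < c.2.2 ∧
    Nonneg (insert c' (C.erase c)) ∧ Pot (insert c' (C.erase c)) < Pot C

/-- `R` is the root: the low component containing the origin if `(0,0,0) ∈ C`,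
an arbitrary low component otherwise. -/
def IsRoot (C R : Finset Cube) : Prop :=
  IsLowComp C R ∧ (((0 : ℤ), (0 : ℤ), (0 : ℤ)) ∈ C → ((0 : ℤ), (0 : ℤ), (0 : ℤ)) ∈ R)

/-- A clear low component `L` (w.r.t. root `R`): `C \ L` is connected, `L ≠ R`, and
some pillar of `C \ L` adjacent to `L` is non-cut in `C \ L`. -/
def IsClear (C R L : Finset Cube) : Prop :=
  IsLowComp C L ∧ Conn (C \ L) ∧ L ≠ R ∧
  ∃ x y zb zt, IsPillar (C \ L) x y zb zt ∧ AdjSets (pillarSet x y zb zt) L ∧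
    ConnOrEmpty ((C \ L) \ pillarSet x y zb zt)

/-- `P(x,y,z_b,z_t)` is a clearing pillar of the clear low component `L`. -/
def IsClearingPillar (C R L : Finset Cube) (x y zb zt : ℤ) : Prop :=
  IsClear C R L ∧ IsPillar (C \ L) x y zb zt ∧ AdjSets (pillarSet x y zb zt) L ∧
    ConnOrEmpty ((C \ L) \ pillarSet x y zb zt)

/-- A move of type (g): it moves a cube of some clear low component, strictly
decreases the potential, and results in a nonnegative configuration. -/
def MoveTypeG (C R : Finset Cube) : Prop :=
  ∃ L, IsClear C R L ∧ ∃ c c', IsMoveVia C c c' ∧ c ∈ L ∧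
    Nonneg (insert c' (C.erase c)) ∧ Pot (insert c' (C.erase c)) < Pot C

/-- The low-high graph `LH_C`: its vertices are the low and high components of `C`,
with edges between adjacent low and high components. -/
def LH (C : Finset Cube) : SimpleGraph (Finset Cube) where
  Adj S T := S ≠ T ∧ AdjSets S T ∧
    ((IsLowComp C S ∧ IsHighComp C T) ∨ (IsHighComp C S ∧ IsLowComp C T))
  symm := by
    constructor
    rintro S T ⟨hne, ⟨a, ha, b, hb, hab⟩, h⟩
    exact ⟨hne.symm, ⟨b, hb, a, ha, cubeAdj_symm hab⟩, h.symm.imp And.symm And.symm⟩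
  loopless := ⟨fun S h => h.1 rfl⟩

/-- `c` lies in the bounding box of `C`. -/
def InBBox (C : Finset Cube) (c : Cube) : Prop :=
  (∃ a ∈ C, a.1 ≤ c.1) ∧ (∃ a ∈ C, c.1 ≤ a.1) ∧
  (∃ a ∈ C, a.2.1 ≤ c.2.1) ∧ (∃ a ∈ C, c.2.1 ≤ a.2.1) ∧
  (∃ a ∈ C, a.2.2 ≤ c.2.2) ∧ (∃ a ∈ C, c.2.2 ≤ a.2.2)

-- ===== auxiliary lemmas =====

lemma gph_mono {S T : Finset Cube} (h : S ⊆ T) : gph S ≤ gph T := by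
  intro a b hab
  exact ⟨h hab.1, h hab.2.1, hab.2.2⟩

lemma reach_mono {S T : Finset Cube} (h : S ⊆ T) {a b : Cube}
    (r : (gph S).Reachable a b) : (gph T).Reachable a b :=
  r.mono (gph_mono h)

lemma mem_pillarSet' {x y zb zt a b z : ℤ} :
    ((a, b, z) : Cube) ∈ pillarSet x y zb zt ↔ a = x ∧ b = y ∧ zb ≤ z ∧ z ≤ zt := by
  unfold pillarSet
  simp only [Finset.mem_image, Finset.mem_Icc, Prod.mk.injEq]
  constructor
  · rintro ⟨w, hw, rfl, rfl, rfl⟩; exact ⟨rfl, rfl, hw.1, hw.2⟩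
  · rintro ⟨rfl, rfl, h1, h2⟩; exact ⟨z, ⟨h1, h2⟩, rfl, rfl, rfl⟩

lemma mem_pillarSet {x y zb zt : ℤ} {c : Cube} :
    c ∈ pillarSet x y zb zt ↔ c.1 = x ∧ c.2.1 = y ∧ zb ≤ c.2.2 ∧ c.2.2 ≤ zt := by
  obtain ⟨a, b, z⟩ := c; exact mem_pillarSet'

lemma conn_glue {A B : Finset Cube} (hA : Conn A) (hB : Conn B) {a b : Cube}
    (ha : a ∈ A) (hb : b ∈ B) (hab : cubeAdj a b) : Conn (A ∪ B) := by
  refine ⟨⟨a, Finset.mem_union_left _ ha⟩, ?_⟩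
  have hedge : (gph (A ∪ B)).Reachable a b :=
    SimpleGraph.Adj.reachable ⟨Finset.mem_union_left _ ha, Finset.mem_union_right _ hb, hab⟩
  intro u hu v hv
  have key : ∀ w ∈ A ∪ B, (gph (A ∪ B)).Reachable a w := by
    intro w hw
    rcases Finset.mem_union.1 hw with h | h
    · exact reach_mono Finset.subset_union_left (hA.2 a ha w h)
    · exact hedge.trans (reach_mono Finset.subset_union_right (hB.2 b hb w h))
  exact (key u hu).symm.trans (key v hv)

lemma crossing {S X : Finset Cube} {a b : Cube} (w : (gph S).Walk a b)
    (ha : a ∈ X) (hb : b ∉ X) :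
    ∃ p q : Cube, p ∈ X ∧ p ∈ S ∧ q ∈ S ∧ q ∉ X ∧ cubeAdj p q := by
  induction w with
  | nil => exact absurd ha hb
  | @cons u x b h w ih =>
    by_cases hx : x ∈ X
    · exact ih hx hb
    · exact ⟨u, x, ha, h.1, h.2.1, hx, h.2.2⟩

lemma reach_in_class {S A : Finset Cube} {ρ : Cube}
    (hA : ∀ c, c ∈ A ↔ c ∈ S ∧ (gph S).Reachable ρ c) :
    ∀ {a b : Cube}, (gph S).Walk a b → (gph S).Reachable ρ a → (gph A).Reachable a b := by
  intro a b w
  induction w with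
  | nil => intro _; exact SimpleGraph.Reachable.refl _
  | @cons u x b h w ih =>
    intro hu
    have hx : (gph S).Reachable ρ x := hu.trans (SimpleGraph.Adj.reachable h)
    have h1 : u ∈ A := (hA u).2 ⟨h.1, hu⟩
    have h2 : x ∈ A := (hA x).2 ⟨h.2.1, hx⟩
    exact (SimpleGraph.Adj.reachable (show (gph A).Adj u x from ⟨h1, h2, h.2.2⟩)).trans (ih hx)

lemma conn_class {S A : Finset Cube} {ρ : Cube} (hρ : ρ ∈ S)
    (hA : ∀ c, c ∈ A ↔ c ∈ S ∧ (gph S).Reachable ρ c) : Conn A := by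
  refine ⟨⟨ρ, (hA ρ).2 ⟨hρ, SimpleGraph.Reachable.refl _⟩⟩, ?_⟩
  intro u hu v hv
  obtain ⟨huS, hru⟩ := (hA u).1 hu
  obtain ⟨hvS, hrv⟩ := (hA v).1 hv
  obtain ⟨wu⟩ := hru
  obtain ⟨wv⟩ := hrv
  have r1 : (gph A).Reachable ρ u := reach_in_class hA wu (SimpleGraph.Reachable.refl _)
  have r2 : (gph A).Reachable ρ v := reach_in_class hA wv (SimpleGraph.Reachable.refl _)
  exact r1.symm.trans r2

lemma class_closed {S A : Finset Cube} {ρ : Cube}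
    (hA : ∀ c, c ∈ A ↔ c ∈ S ∧ (gph S).Reachable ρ c)
    {a b : Cube} (ha : a ∈ A) (hb : b ∈ S) (hab : cubeAdj a b) : b ∈ A := by
  obtain ⟨haS, hra⟩ := (hA a).1 ha
  exact (hA b).2 ⟨hb, hra.trans (SimpleGraph.Adj.reachable ⟨haS, hb, hab⟩)⟩

lemma pillar_reach_up {S : Finset Cube} {x y zb zt : ℤ}
    (hsub : pillarSet x y zb zt ⊆ S) :
    ∀ (k : ℕ) (z : ℤ), zb ≤ z → z + k ≤ zt →
      (gph S).Reachable (x, y, z) (x, y, z + k) := by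
  intro k
  induction k with
  | zero =>
    intro z _ _
    simpa using SimpleGraph.Reachable.refl ((x, y, z) : Cube)
  | succ k ih =>
    intro z hz hzk
    have h1 : ((x, y, z) : Cube) ∈ S := hsub (mem_pillarSet'.2 ⟨rfl, rfl, hz, by omega⟩)
    have h2 : ((x, y, z + 1) : Cube) ∈ S := hsub (mem_pillarSet'.2 ⟨rfl, rfl, by omega, by omega⟩)
    have hadj : cubeAdj (x, y, z) (x, y, z + 1) := by unfold cubeAdj; simp
    have step : (gph S).Reachable (x, y, z) (x, y, z + 1) :=
      SimpleGraph.Adj.reachable ⟨h1, h2, hadj⟩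
    have hzk' : z + 1 + (k : ℤ) ≤ zt := by push_cast at hzk; omega
    have := ih (z + 1) (by omega) hzk'
    have heq : ((x, y, z + 1 + (k : ℤ)) : Cube) = (x, y, z + (k + 1 : ℕ)) := by
      push_cast; ring_nf
    rw [heq] at this
    exact step.trans this

lemma pillar_reach {S : Finset Cube} {x y zb zt : ℤ}
    (hsub : pillarSet x y zb zt ⊆ S) {z1 z2 : ℤ}
    (h1 : zb ≤ z1) (h1' : z1 ≤ zt) (h2 : zb ≤ z2) (h2' : z2 ≤ zt) :
    (gph S).Reachable (x, y, z1) (x, y, z2) := by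
  rcases le_total z1 z2 with h | h
  · have := pillar_reach_up hsub (z2 - z1).toNat z1 h1 (by omega)
    have heq : ((x, y, z1 + ((z2 - z1).toNat : ℤ)) : Cube) = (x, y, z2) := by
      congr 2; omega
    rwa [heq] at this
  · have := pillar_reach_up hsub (z1 - z2).toNat z2 h2 (by omega)
    have heq : ((x, y, z2 + ((z1 - z2).toNat : ℤ)) : Cube) = (x, y, z1) := by
      congr 2; omega
    rw [heq] at this
    exact this.symm

lemma conn_pillarSet {x y zb zt : ℤ} (h : zb ≤ zt) : Conn (pillarSet x y zb zt) := by
  refine ⟨⟨(x, y, zb), mem_pillarSet'.2 ⟨rfl, rfl, le_refl _, h⟩⟩, ?_⟩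
  intro a ha b hb
  obtain ⟨ax, ay, az⟩ := a
  obtain ⟨bx, by', bz⟩ := b
  obtain ⟨rfl, rfl, ha1, ha2⟩ := mem_pillarSet'.1 ha
  obtain ⟨rfl, rfl, hb1, hb2⟩ := mem_pillarSet'.1 hb
  exact pillar_reach (le_refl _) ha1 ha2 hb1 hb2

lemma pillar_sep {C : Finset Cube} {x y b1 t1 b2 t2 : ℤ}
    (h1 : IsPillar C x y b1 t1) (h2 : IsPillar C x y b2 t2)
    (hle : b1 ≤ b2) (hcl : b2 ≤ t1 + 1) : b1 = b2 ∧ t1 = t2 := by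
  have hb : b1 = b2 := by
    by_contra hne
    have : ((x, y, b2 - 1) : Cube) ∈ C :=
      h1.1.2 (mem_pillarSet'.2 ⟨rfl, rfl, by omega, by omega⟩)
    exact h2.2.1 this
  subst hb
  have hb2t2 := h2.1.1
  have hb1t1 := h1.1.1
  constructor
  · rfl
  · by_contra hne
    rcases lt_or_gt_of_ne hne with h | h
    · have : ((x, y, t1 + 1) : Cube) ∈ C :=
        h2.1.2 (mem_pillarSet'.2 ⟨rfl, rfl, by omega, by omega⟩)
      exact h1.2.2 this
    · have : ((x, y, t2 + 1) : Cube) ∈ C :=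
        h1.1.2 (mem_pillarSet'.2 ⟨rfl, rfl, by omega, by omega⟩)
      exact h2.2.2 this

lemma pillar_exists {C : Finset Cube} (hN : Nonneg C) {c : Cube} (hc : c ∈ C) :
    ∃ zb zt, IsPillar C c.1 c.2.1 zb zt ∧ zb ≤ c.2.2 ∧ c.2.2 ≤ zt := by
  classical
  have hCne : C.Nonempty := ⟨c, hc⟩
  obtain ⟨M, hMle'⟩ := Finset.exists_le (C.image fun d => d.2.2)
  have hMle : ∀ d ∈ C, d.2.2 ≤ M := fun d hd => hMle' _ (Finset.mem_image_of_mem _ hd)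
  have hceta : ((c.1, c.2.1, c.2.2) : Cube) = c := rfl
  have hc0 : (0:ℤ) ≤ c.2.2 := (hN c hc).2.2
  set T : Finset ℤ := (Finset.Icc 0 c.2.2).filter
    (fun z => ∀ w, z ≤ w → w ≤ c.2.2 → ((c.1, c.2.1, w) : Cube) ∈ C) with hT
  have hcT : c.2.2 ∈ T := by
    rw [hT]
    refine Finset.mem_filter.2 ⟨Finset.mem_Icc.2 ⟨hc0, le_refl _⟩, ?_⟩
    intro w hw1 hw2
    have : w = c.2.2 := le_antisymm hw2 hw1
    rw [this, hceta]; exact hc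
  have hTne : T.Nonempty := ⟨_, hcT⟩
  set zb : ℤ := T.min' hTne with hzb
  have hzbT : zb ∈ T := T.min'_mem hTne
  obtain ⟨hzbIcc, hzbProp⟩ := Finset.mem_filter.1 hzbT
  obtain ⟨hzb0, hzbc⟩ := Finset.mem_Icc.1 hzbIcc
  set U : Finset ℤ := (Finset.Icc c.2.2 M).filter
    (fun z => ∀ w, c.2.2 ≤ w → w ≤ z → ((c.1, c.2.1, w) : Cube) ∈ C) with hU
  have hcU : c.2.2 ∈ U := by
    rw [hU]
    refine Finset.mem_filter.2 ⟨Finset.mem_Icc.2 ⟨le_refl _, hMle c hc⟩, ?_⟩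
    intro w hw1 hw2
    have : w = c.2.2 := le_antisymm hw2 hw1
    rw [this, hceta]; exact hc
  have hUne : U.Nonempty := ⟨_, hcU⟩
  set zt : ℤ := U.max' hUne with hzt
  have hztU : zt ∈ U := U.max'_mem hUne
  obtain ⟨hztIcc, hztProp⟩ := Finset.mem_filter.1 hztU
  obtain ⟨hztc, hztM⟩ := Finset.mem_Icc.1 hztIcc
  refine ⟨zb, zt, ⟨⟨by omega, ?_⟩, ?_, ?_⟩, hzbc, hztc⟩
  · intro d hd
    obtain ⟨dx, dy, dz⟩ := d
    obtain ⟨rfl, rfl, hd1, hd2⟩ := mem_pillarSet'.1 hd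
    rcases le_total dz c.2.2 with h | h
    · exact hzbProp dz hd1 h
    · exact hztProp dz h hd2
  · intro hmem
    have h0 : (0:ℤ) ≤ zb - 1 := (hN _ hmem).2.2
    have : zb - 1 ∈ T := by
      rw [hT]
      refine Finset.mem_filter.2 ⟨Finset.mem_Icc.2 ⟨h0, by omega⟩, ?_⟩
      intro w hw1 hw2
      rcases eq_or_lt_of_le hw1 with h' | h'
      · rw [← h']; exact hmem
      · exact hzbProp w (by omega) hw2
    have := T.min'_le _ this
    omega
  · intro hmem
    have hle : zt + 1 ≤ M := hMle _ hmem
    have : zt + 1 ∈ U := by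
      rw [hU]
      refine Finset.mem_filter.2 ⟨Finset.mem_Icc.2 ⟨by omega, hle⟩, ?_⟩
      intro w hw1 hw2
      rcases eq_or_lt_of_le hw2 with h' | h'
      · rw [h']; exact hmem
      · exact hztProp w hw1 (by omega)
    have := U.le_max' _ this
    omega

lemma closed_pillar_subset {C E : Finset Cube}
    (hcl : ∀ e ∈ E, ∀ w : Cube, w ∈ C → w.1 = e.1 → w.2.1 = e.2.1 →
      (w.2.2 - e.2.2).natAbs = 1 → w ∈ E)
    {x y zb zt : ℤ} (hp : IsPillar C x y zb zt) {z0 : ℤ}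
    (h0 : zb ≤ z0) (h0' : z0 ≤ zt) (he : ((x, y, z0) : Cube) ∈ E) :
    pillarSet x y zb zt ⊆ E := by
  have hup : ∀ z : ℤ, z0 ≤ z → z ≤ zt → ((x, y, z) : Cube) ∈ E := by
    have := Int.le_induction (motive := fun z _ => z ≤ zt → ((x, y, z) : Cube) ∈ E)
      (m := z0) (fun _ => he) ?_
    · exact fun z hz => this z hz
    · intro n hn ih hzt
      have hnE : ((x, y, n) : Cube) ∈ E := ih (by omega)
      have hnC : ((x, y, n + 1) : Cube) ∈ C :=
        hp.1.2 (mem_pillarSet'.2 ⟨rfl, rfl, by omega, hzt⟩)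
      exact hcl _ hnE _ hnC rfl rfl (by simp)
  have hdown : ∀ z : ℤ, z ≤ z0 → zb ≤ z → ((x, y, z) : Cube) ∈ E := by
    have := Int.le_induction_down (motive := fun z _ => zb ≤ z → ((x, y, z) : Cube) ∈ E)
      (m := z0) (fun _ => he) ?_
    · exact fun z hz => this z hz
    · intro n hn ih hzb
      have hnE : ((x, y, n) : Cube) ∈ E := ih (by omega)
      have hnC : ((x, y, n - 1) : Cube) ∈ C :=
        hp.1.2 (mem_pillarSet'.2 ⟨rfl, rfl, hzb, by omega⟩)
      exact hcl _ hnE _ hnC rfl rfl (by simp)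
  intro c hcmem
  obtain ⟨cx, cy, cz⟩ := c
  obtain ⟨rfl, rfl, hc1, hc2⟩ := mem_pillarSet'.1 hcmem
  rcases le_total z0 cz with h | h
  · exact hup cz h hc2
  · exact hdown cz h hc1

lemma key_noncut (C : Finset Cube) (hC : Conn C) (hN : Nonneg C) :
    ∀ n : ℕ, ∀ E : Finset Cube, E.card ≤ n → E ⊆ C → E.Nonempty →
      (∀ e ∈ E, ∀ w : Cube, w ∈ C → w.1 = e.1 → w.2.1 = e.2.1 →
        (w.2.2 - e.2.2).natAbs = 1 → w ∈ E) →
      Conn (C \ E) →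
      ∃ u v qb qt, IsPillar C u v qb qt ∧ pillarSet u v qb qt ⊆ E ∧
        Conn (C \ pillarSet u v qb qt) := by
  intro n
  induction n with
  | zero =>
    intro E hcard hsub hne _ _
    have := Finset.card_pos.2 hne
    omega
  | succ n ih =>
    intro E hcard hsub hne hcl hconnCE
    classical
    obtain ⟨e₁, he₁⟩ := hne
    obtain ⟨c₁, hc₁⟩ := hconnCE.1
    have hc₁C : c₁ ∈ C := (Finset.mem_sdiff.1 hc₁).1
    have hc₁E : c₁ ∉ E := (Finset.mem_sdiff.1 hc₁).2
    obtain ⟨wlk⟩ := hC.2 e₁ (hsub he₁) c₁ hc₁C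
    obtain ⟨p, q, hpE, hpC, hqC, hqE, hpq⟩ := crossing wlk he₁ hc₁E
    obtain ⟨b₀, t₀, hp0, hb₀, ht₀⟩ := pillar_exists hN hpC
    set Q₀ := pillarSet p.1 p.2.1 b₀ t₀ with hQ₀
    have hpeta : ((p.1, p.2.1, p.2.2) : Cube) = p := rfl
    have hpQ₀ : p ∈ Q₀ := by
      rw [hQ₀, ← hpeta]
      exact mem_pillarSet'.2 ⟨rfl, rfl, hb₀, ht₀⟩
    have hQ₀E : Q₀ ⊆ E := by
      refine closed_pillar_subset hcl hp0 hb₀ ht₀ ?_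
      rw [hpeta]; exact hpE
    have hQ₀C : Q₀ ⊆ C := hp0.1.2
    by_cases hconnQ : Conn (C \ Q₀)
    · exact ⟨p.1, p.2.1, b₀, t₀, hp0, hQ₀E, hconnQ⟩
    · set A₀ := (C \ Q₀).filter (fun w => (gph (C \ Q₀)).Reachable q w) with hA₀
      have hAchar : ∀ c, c ∈ A₀ ↔ c ∈ C \ Q₀ ∧ (gph (C \ Q₀)).Reachable q c := by
        intro c; rw [hA₀]; exact Finset.mem_filter
      have hqCQ : q ∈ C \ Q₀ := Finset.mem_sdiff.2 ⟨hqC, fun h => hqE (hQ₀E h)⟩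
      have hqA : q ∈ A₀ := (hAchar q).2 ⟨hqCQ, SimpleGraph.Reachable.refl _⟩
      set D₀ := (C \ Q₀) \ A₀ with hD₀
      have hCEsub : C \ E ⊆ C \ Q₀ := by
        intro w hw
        obtain ⟨h1, h2⟩ := Finset.mem_sdiff.1 hw
        exact Finset.mem_sdiff.2 ⟨h1, fun hh => h2 (hQ₀E hh)⟩
      have hCEA : ∀ w ∈ C \ E, w ∈ A₀ := by
        intro w hw
        have hq' : q ∈ C \ E := Finset.mem_sdiff.2 ⟨hqC, hqE⟩
        exact (hAchar w).2 ⟨hCEsub hw, reach_mono hCEsub (hconnCE.2 q hq' w hw)⟩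
      have hD₀ne : D₀.Nonempty := by
        by_contra hD
        rw [Finset.not_nonempty_iff_eq_empty, hD₀, Finset.sdiff_eq_empty_iff_subset] at hD
        apply hconnQ
        refine ⟨⟨q, hqCQ⟩, ?_⟩
        intro a ha b hb
        obtain ⟨_, hra⟩ := (hAchar a).1 (hD ha)
        obtain ⟨_, hrb⟩ := (hAchar b).1 (hD hb)
        exact hra.symm.trans hrb
      have hD₀CQ : D₀ ⊆ C \ Q₀ := Finset.sdiff_subset
      have hD₀E : D₀ ⊆ E := by
        intro w hw
        obtain ⟨hw1, hw2⟩ := Finset.mem_sdiff.1 hw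
        by_contra hwE
        exact hw2 (hCEA w (Finset.mem_sdiff.2 ⟨(Finset.mem_sdiff.1 hw1).1, hwE⟩))
      have hD₀cl : ∀ e ∈ D₀, ∀ w : Cube, w ∈ C → w.1 = e.1 → w.2.1 = e.2.1 →
          (w.2.2 - e.2.2).natAbs = 1 → w ∈ D₀ := by
        intro e heD w hwC hw1 hw2 hw3
        have heE : e ∈ E := hD₀E heD
        have hwE : w ∈ E := hcl e heE w hwC hw1 hw2 hw3
        obtain ⟨heCQ, heA⟩ := Finset.mem_sdiff.1 heD
        have heC : e ∈ C := (Finset.mem_sdiff.1 heCQ).1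
        have heQ : e ∉ Q₀ := (Finset.mem_sdiff.1 heCQ).2
        have hadj : cubeAdj w e := by unfold cubeAdj; omega
        have hwQ : w ∉ Q₀ := by
          intro hwQ₀
          rw [hQ₀] at hwQ₀
          obtain ⟨ex, ey, ez⟩ := e
          obtain ⟨wx, wy, wz⟩ := w
          obtain ⟨rfl, rfl, hwz1, hwz2⟩ := mem_pillarSet'.1 hwQ₀
          dsimp only at hw1 hw2 hw3
          have hex : ex = p.1 := hw1.symm
          have hey : ey = p.2.1 := hw2.symm
          subst hex; subst hey
          have heQ' : ¬ (b₀ ≤ ez ∧ ez ≤ t₀) := by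
            intro hh
            exact heQ (by rw [hQ₀]; exact mem_pillarSet'.2 ⟨rfl, rfl, hh.1, hh.2⟩)
          have hez : ez = b₀ - 1 ∨ ez = t₀ + 1 := by omega
          rcases hez with hez | hez
          · subst hez; exact hp0.2.1 heC
          · subst hez; exact hp0.2.2 heC
        have hwCQ : w ∈ C \ Q₀ := Finset.mem_sdiff.2 ⟨hwC, hwQ⟩
        have hwA : w ∉ A₀ := by
          intro hwA₀
          exact heA (class_closed hAchar hwA₀ heCQ hadj)
        exact Finset.mem_sdiff.2 ⟨hwCQ, hwA⟩
      have hsetEq : C \ D₀ = A₀ ∪ Q₀ := by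
        ext c
        constructor
        · intro hcmem
          obtain ⟨hcC, hcD⟩ := Finset.mem_sdiff.1 hcmem
          by_cases hcQ : c ∈ Q₀
          · exact Finset.mem_union_right _ hcQ
          · refine Finset.mem_union_left _ ?_
            by_contra hcA
            exact hcD (Finset.mem_sdiff.2 ⟨Finset.mem_sdiff.2 ⟨hcC, hcQ⟩, hcA⟩)
        · intro hcmem
          rcases Finset.mem_union.1 hcmem with h | h
          · have hcCQ := ((hAchar c).1 h).1
            refine Finset.mem_sdiff.2 ⟨(Finset.mem_sdiff.1 hcCQ).1, ?_⟩
            intro hcD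
            exact (Finset.mem_sdiff.1 hcD).2 h
          · refine Finset.mem_sdiff.2 ⟨hQ₀C h, ?_⟩
            intro hcD
            exact (Finset.mem_sdiff.1 (Finset.mem_sdiff.1 hcD).1).2 h
      have hconnCD : Conn (C \ D₀) := by
        rw [hsetEq]
        exact conn_glue (conn_class hqCQ hAchar) (conn_pillarSet hp0.1.1) hqA hpQ₀
          (cubeAdj_symm hpq)
      have hcard' : D₀.card ≤ n := by
        have hss : D₀ ⊂ E := by
          refine Finset.ssubset_iff_of_subset hD₀E |>.2 ⟨p, hpE, ?_⟩
          intro hpD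
          exact (Finset.mem_sdiff.1 (hD₀CQ hpD)).2 hpQ₀
        have := Finset.card_lt_card hss
        omega
      obtain ⟨u, v, qb, qt, h1, h2, h3⟩ := ih D₀ hcard' (fun w hw => (Finset.mem_sdiff.1 (hD₀CQ hw)).1) hD₀ne hD₀cl hconnCD
      exact ⟨u, v, qb, qt, h1, h2.trans hD₀E, h3⟩




lemma side_cube_adj {C : Finset Cube} (hN : Nonneg C) {u v qb qt x' y' z' : ℤ}
    (hmem : ((x', y', z') : Cube) ∈ C) (hs : IsSide u v x' y')
    (h1 : qb ≤ z') (h2 : z' ≤ qt) :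
    ∃ b' t', AdjPillar C u v qb qt x' y' b' t' ∧ b' ≤ z' ∧ z' ≤ t' := by
  obtain ⟨b', t', hp, hb', ht'⟩ := pillar_exists hN hmem
  have hb2 : b' ≤ z' := hb'
  have ht2 : z' ≤ t' := ht'
  exact ⟨b', t', ⟨hp, hs, by omega, by omega⟩, hb2, ht2⟩

lemma not_cut_of_conn {C : Finset Cube} {c : Cube} (h : Conn (C.erase c)) :
    ¬ IsCutCube C c := fun hh => hh.2 h

set_option maxHeartbeats 2000000 in
lemma final_contra (C : Finset Cube) (hC : Conn C) (hN : Nonneg C) (hae : NoCondAE C)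
    {u v qb qt : ℤ} (hQ : IsPillar C u v qb qt) (hqb : 0 < qb)
    (hconnQ : Conn (C \ pillarSet u v qb qt)) : False := by
  classical
  have hQsub : pillarSet u v qb qt ⊆ C := hQ.1.2
  have hbt : qb ≤ qt := hQ.1.1
  have hnot := hae u v qb qt hQ.1 (Or.inr hconnQ)
  -- ** existence of an adjacent pillar **
  obtain ⟨r, hr⟩ := hconnQ.1
  have hrC : r ∈ C := (Finset.mem_sdiff.1 hr).1
  have hrQ : r ∉ pillarSet u v qb qt := (Finset.mem_sdiff.1 hr).2
  have hq0 : ((u, v, qb) : Cube) ∈ pillarSet u v qb qt :=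
    mem_pillarSet'.2 ⟨rfl, rfl, le_refl _, hbt⟩
  obtain ⟨wlk⟩ := hC.2 (u, v, qb) (hQsub hq0) r hrC
  obtain ⟨p, q, hpQ, hpC, hqC, hqQ, hpq⟩ := crossing wlk hq0 hrQ
  obtain ⟨px, py, pz⟩ := p
  obtain ⟨hpx, hpy, hpz1, hpz2⟩ := mem_pillarSet'.1 hpQ
  obtain ⟨qx, qy, qz⟩ := q
  unfold cubeAdj at hpq
  dsimp only at hpq
  have hqnotQ : ¬ (qx = u ∧ qy = v ∧ qb ≤ qz ∧ qz ≤ qt) :=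
    fun hh => hqQ (mem_pillarSet'.2 hh)
  have hside : IsSide u v qx qy ∧ qz = pz := by
    by_cases hxy : qx = u ∧ qy = v
    · exfalso
      have hqz : qz = qb - 1 ∨ qz = qt + 1 := by omega
      rcases hqz with h | h
      · have heq : ((qx, qy, qz) : Cube) = ((u, v, qb - 1) : Cube) := by
          rw [hxy.1, hxy.2, h]
        exact hQ.2.1 (heq ▸ hqC)
      · have heq : ((qx, qy, qz) : Cube) = ((u, v, qt + 1) : Cube) := by
          rw [hxy.1, hxy.2, h]
        exact hQ.2.2 (heq ▸ hqC)
    · rw [not_and_or] at hxy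
      constructor
      · unfold IsSide; omega
      · omega
  obtain ⟨hSq, hqzpz⟩ := hside
  obtain ⟨b₁', t₁', hadjq, _, _⟩ :=
    side_cube_adj (u := u) (v := v) (qb := qb) (qt := qt) (x' := qx) (y' := qy) (z' := qz)
      hN hqC hSq (by omega) (by omega)
  have hexAdj : ∃ x' y' b' t', AdjPillar C u v qb qt x' y' b' t' :=
    ⟨qx, qy, b₁', t₁', hadjq⟩
  -- ** step (c): all adjacent pillars have bottom ≥ qb **
  have hstepc : ∀ x' y' b' t', AdjPillar C u v qb qt x' y' b' t' → qb ≤ b' := by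
    intro x' y' b' t' hadj
    by_contra hlt
    exact hnot (Or.inr (Or.inr (Or.inl ⟨hQ.2.1, x', y', b', t', hadj, by omega⟩)))
  -- ** step (d): all adjacent pillars have bottom ≥ qb + 1 **
  have hstepd : ∀ x' y' b' t', AdjPillar C u v qb qt x' y' b' t' → qb + 1 ≤ b' := by
    intro x' y' b' t' hadj
    by_contra hlt
    have hbeq : b' = qb := by have := hstepc x' y' b' t' hadj; omega
    refine hnot (Or.inr (Or.inr (Or.inr (Or.inl ⟨hQ.2.1, x', y', b', t', hadj, ?_, hbeq, hqb⟩))))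
    intro z''b z''t hadj''
    have := hstepc x' y' z''b z''t hadj''
    omega
  -- ** step (b): all adjacent pillars have bottom ≥ qb + 2 **
  have hstepb : ∀ x' y' b' t', AdjPillar C u v qb qt x' y' b' t' → qb + 2 ≤ b' := by
    intro x' y' b' t' hadj
    by_contra hlt
    have hbeq : b' = qb + 1 := by have := hstepd x' y' b' t' hadj; omega
    obtain ⟨hP', hS', hbqt', hqbt'⟩ := hadj
    refine hnot (Or.inr (Or.inl ⟨x', y', b', t', ⟨hP', hS', hbqt', hqbt'⟩, by omega, ?_⟩))
    refine not_cut_of_conn ?_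
    have hbeq' : b' - 1 = qb := by omega
    rw [hbeq']
    have hup : qb + 1 ≤ qt := by omega
    have hbt'' : b' ≤ t' := hP'.1.1
    have hwC : ((x', y', qb + 1) : Cube) ∈ C :=
      hP'.1.2 (mem_pillarSet'.2 ⟨rfl, rfl, by omega, by omega⟩)
    have hwQ : ((x', y', qb + 1) : Cube) ∉ pillarSet u v qb qt := by
      intro hh
      obtain ⟨h1, h2, -, -⟩ := mem_pillarSet'.1 hh
      unfold IsSide at hS'; omega
    have hglue := conn_glue hconnQ (conn_pillarSet (show qb + 1 ≤ qt by omega))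
      (Finset.mem_sdiff.2 ⟨hwC, hwQ⟩)
      (mem_pillarSet'.2 ⟨rfl, rfl, le_refl _, hup⟩ :
        ((u, v, qb + 1) : Cube) ∈ pillarSet u v (qb + 1) qt)
      (by have hS'' := hS'; unfold IsSide at hS''; unfold cubeAdj; dsimp only; omega)
    have hsetEq : C.erase ((u, v, qb) : Cube) =
        (C \ pillarSet u v qb qt) ∪ pillarSet u v (qb + 1) qt := by
      ext c
      obtain ⟨cx, cy, cz⟩ := c
      simp only [Finset.mem_erase, Finset.mem_sdiff, Finset.mem_union, mem_pillarSet',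
        Prod.mk.injEq, ne_eq]
      constructor
      · rintro ⟨hne, hcC⟩
        by_cases hcol : cx = u ∧ cy = v
        · obtain ⟨rfl, rfl⟩ := hcol
          by_cases hrange : qb ≤ cz ∧ cz ≤ qt
          · right; exact ⟨rfl, rfl, by omega, hrange.2⟩
          · left; exact ⟨hcC, by tauto⟩
        · left
          refine ⟨hcC, ?_⟩
          rintro ⟨rfl, rfl, -, -⟩
          exact hcol ⟨rfl, rfl⟩
      · rintro (⟨hcC, hnQ⟩ | ⟨rfl, rfl, h1, h2⟩)
        · refine ⟨?_, hcC⟩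
          rintro ⟨rfl, rfl, rfl⟩
          exact hnQ ⟨rfl, rfl, le_refl _, hbt⟩
        · exact ⟨by rintro ⟨-, -, rfl⟩; omega,
            hQsub (mem_pillarSet'.2 ⟨rfl, rfl, by omega, h2⟩)⟩
    rw [hsetEq]
    exact hglue
  -- ** main split: two adjacent pillars on one side, or condition (e) **
  by_cases htwo : ∃ x' y' b1 t1 b2 t2, AdjPillar C u v qb qt x' y' b1 t1 ∧
      AdjPillar C u v qb qt x' y' b2 t2 ∧ ¬ (b1 = b2 ∧ t1 = t2)
  · -- two distinct adjacent pillars on a side: derive condition (b)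
    have main : ∀ x' y' b1 t1 b2 t2, AdjPillar C u v qb qt x' y' b1 t1 →
        AdjPillar C u v qb qt x' y' b2 t2 → ¬ (b1 = b2 ∧ t1 = t2) → b1 ≤ b2 → False := by
      intro x' y' b1 t1 b2 t2 ha1 ha2 hne hle
      have hsep : t1 + 2 ≤ b2 := by
        by_contra hcl
        exact hne (pillar_sep ha1.1 ha2.1 hle (by omega))
      have hb1 : qb + 2 ≤ b1 := hstepb _ _ _ _ ha1
      have hb2qt : b2 ≤ qt := ha2.2.2.1
      have hb1t1 : b1 ≤ t1 := ha1.1.1.1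
      have hb2t2 : b2 ≤ t2 := ha2.1.1.1
      have hS' := ha1.2.1
      refine hnot (Or.inr (Or.inl ⟨x', y', b2, t2, ha2, by omega, ?_⟩))
      refine not_cut_of_conn ?_
      have hw1C : ((x', y', b1) : Cube) ∈ C :=
        ha1.1.1.2 (mem_pillarSet'.2 ⟨rfl, rfl, le_refl _, hb1t1⟩)
      have hw2C : ((x', y', b2) : Cube) ∈ C :=
        ha2.1.1.2 (mem_pillarSet'.2 ⟨rfl, rfl, le_refl _, hb2t2⟩)
      have hcolne : ¬ (x' = u ∧ y' = v) := by unfold IsSide at hS'; omega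
      have hw1Q : ((x', y', b1) : Cube) ∉ pillarSet u v qb qt := by
        intro hh; obtain ⟨h1, h2, -, -⟩ := mem_pillarSet'.1 hh; exact hcolne ⟨h1, h2⟩
      have hw2Q : ((x', y', b2) : Cube) ∉ pillarSet u v qb qt := by
        intro hh; obtain ⟨h1, h2, -, -⟩ := mem_pillarSet'.1 hh; exact hcolne ⟨h1, h2⟩
      have hglue1 := conn_glue hconnQ (conn_pillarSet (show qb ≤ b2 - 2 by omega))
        (Finset.mem_sdiff.2 ⟨hw1C, hw1Q⟩)
        (mem_pillarSet'.2 ⟨rfl, rfl, by omega, by omega⟩ :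
          ((u, v, b1) : Cube) ∈ pillarSet u v qb (b2 - 2))
        (by have hS'' := hS'; unfold IsSide at hS''; unfold cubeAdj; dsimp only; omega)
      have hglue2 := conn_glue hglue1 (conn_pillarSet hb2qt)
        (Finset.mem_union_left _ (Finset.mem_sdiff.2 ⟨hw2C, hw2Q⟩))
        (mem_pillarSet'.2 ⟨rfl, rfl, le_refl _, hb2qt⟩ :
          ((u, v, b2) : Cube) ∈ pillarSet u v b2 qt)
        (by have hS'' := hS'; unfold IsSide at hS''; unfold cubeAdj; dsimp only; omega)
      have hsetEq : C.erase ((u, v, b2 - 1) : Cube) =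
          ((C \ pillarSet u v qb qt) ∪ pillarSet u v qb (b2 - 2)) ∪ pillarSet u v b2 qt := by
        ext c
        obtain ⟨cx, cy, cz⟩ := c
        simp only [Finset.mem_erase, Finset.mem_sdiff, Finset.mem_union, mem_pillarSet',
          Prod.mk.injEq, ne_eq]
        constructor
        · rintro ⟨hne', hcC⟩
          by_cases hcol : cx = u ∧ cy = v
          · obtain ⟨rfl, rfl⟩ := hcol
            by_cases hrange : qb ≤ cz ∧ cz ≤ qt
            · by_cases hlow : cz ≤ b2 - 2
              · left; right; exact ⟨rfl, rfl, hrange.1, hlow⟩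
              · right
                refine ⟨rfl, rfl, ?_, hrange.2⟩
                rcases eq_or_lt_of_le (show b2 - 1 ≤ cz by omega) with h | h
                · exact absurd (by omega : cz = b2 - 1) (fun hh => hne' ⟨rfl, rfl, hh⟩)
                · omega
            · left; left; exact ⟨hcC, by tauto⟩
          · left; left
            refine ⟨hcC, ?_⟩
            rintro ⟨rfl, rfl, -, -⟩
            exact hcol ⟨rfl, rfl⟩
        · rintro ((⟨hcC, hnQ⟩ | ⟨rfl, rfl, h1, h2⟩) | ⟨rfl, rfl, h1, h2⟩)
          · refine ⟨?_, hcC⟩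
            rintro ⟨rfl, rfl, rfl⟩
            exact hnQ ⟨rfl, rfl, by omega, by omega⟩
          · exact ⟨by rintro ⟨-, -, rfl⟩; omega,
              hQsub (mem_pillarSet'.2 ⟨rfl, rfl, h1, by omega⟩)⟩
          · exact ⟨by rintro ⟨-, -, rfl⟩; omega,
              hQsub (mem_pillarSet'.2 ⟨rfl, rfl, by omega, h2⟩)⟩
      rw [hsetEq]
      exact hglue2
    obtain ⟨x', y', b1, t1, b2, t2, ha1, ha2, hne⟩ := htwo
    rcases le_total b1 b2 with h | h
    · exact main x' y' b1 t1 b2 t2 ha1 ha2 hne h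
    · exact main x' y' b2 t2 b1 t1 ha2 ha1 (fun hh => hne ⟨hh.1.symm, hh.2.symm⟩) h
  · -- condition (e)
    push_neg at htwo
    obtain ⟨β, hβP, hleast⟩ := Int.exists_least_of_bdd
      (P := fun z => ∃ x' y' t', AdjPillar C u v qb qt x' y' z t')
      ⟨qb, fun z hz => by obtain ⟨x', y', t', h⟩ := hz; have := hstepb x' y' z t' h; omega⟩
      ⟨b₁', qx, qy, t₁', hadjq⟩
    obtain ⟨x₁, y₁, t₁, hadj₁⟩ := hβP
    refine hnot (Or.inr (Or.inr (Or.inr (Or.inr ⟨?_, x₁, y₁, β, t₁, hadj₁,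
      by have := hstepb _ _ _ _ hadj₁; omega, ?_, ?_⟩))))
    · intro x' y' z'b z't z''b z''t h1 h2
      exact htwo x' y' z'b z't z''b z''t h1 h2
    · intro x'' y'' z''b z''t h'' _
      exact hleast z''b ⟨x'', y'', z''t, h''⟩
    · have hnoside : ∀ x'' y'', IsSide u v x'' y'' → ((x'', y'', qb) : Cube) ∉ C := by
        intro x'' y'' hS hmem
        obtain ⟨b'', t'', hadj'', hb'', ht''⟩ := side_cube_adj hN hmem hS (le_refl _) hbt
        have := hstepb _ _ _ _ hadj''
        omega
      by_cases hx : x₁ = u + 1 ∧ y₁ = v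
      · refine ⟨u - 1, v, by unfold IsSide; omega, ?_, hnoside _ _ (by unfold IsSide; omega)⟩
        simp only [Prod.mk.injEq, ne_eq, not_and]
        intro h
        omega
      · refine ⟨u + 1, v, by unfold IsSide; omega, ?_, hnoside _ _ (by unfold IsSide; omega)⟩
        simp only [Prod.mk.injEq, ne_eq, not_and]
        rw [not_and_or] at hx
        intro h h'
        omega

set_option maxHeartbeats 1000000 in
theorem main_result (C : Finset Cube) (hC : Conn C) (hN : Nonneg C)
    (hae : NoCondAE C)
    (H : Finset Cube) (hH : IsHighComp C H) (hconn : Conn (C \ H)) :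
    ∀ x y zb zt, IsPillar H x y zb zt → Conn (C \ pillarSet x y zb zt) := by
  intro x y zb zt hP
  by_contra hnc
  classical
  obtain ⟨⟨hzbzt, hPH⟩, hPb, hPt⟩ := hP
  have hHC : H ⊆ C := fun c hc => Finset.mem_of_mem_filter c (hH.1 hc)
  have hHpos : ∀ c ∈ H, 0 < c.2.2 := fun c hc => (Finset.mem_filter.1 (hH.1 hc)).2
  have hPC : pillarSet x y zb zt ⊆ C := fun c hc => hHC (hPH hc)
  have hzb1 : 0 < zb := by
    have := hHpos _ (hPH (mem_pillarSet'.2 ⟨rfl, rfl, le_refl _, hzbzt⟩))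
    exact this
  obtain ⟨c₀, hc₀⟩ := hconn.1
  have hc₀C : c₀ ∈ C := (Finset.mem_sdiff.1 hc₀).1
  have hc₀H : c₀ ∉ H := (Finset.mem_sdiff.1 hc₀).2
  have hc₀P : c₀ ∉ pillarSet x y zb zt := fun h => hc₀H (hPH h)
  have hc₀CP : c₀ ∈ C \ pillarSet x y zb zt := Finset.mem_sdiff.2 ⟨hc₀C, hc₀P⟩
  set A := (C \ pillarSet x y zb zt).filter
    (fun w => (gph (C \ pillarSet x y zb zt)).Reachable c₀ w) with hA
  have hAchar : ∀ c, c ∈ A ↔ c ∈ C \ pillarSet x y zb zt ∧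
      (gph (C \ pillarSet x y zb zt)).Reachable c₀ c := by
    intro c; rw [hA]; exact Finset.mem_filter
  have hCPsub : C \ H ⊆ C \ pillarSet x y zb zt := fun w hw =>
    Finset.mem_sdiff.2 ⟨(Finset.mem_sdiff.1 hw).1,
      fun hh => (Finset.mem_sdiff.1 hw).2 (hPH hh)⟩
  have hCHA : ∀ w ∈ C \ H, w ∈ A := fun w hw =>
    (hAchar w).2 ⟨hCPsub hw, reach_mono hCPsub (hconn.2 c₀ hc₀ w hw)⟩
  set D := (C \ pillarSet x y zb zt) \ A with hD
  have hDne : D.Nonempty := by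
    by_contra hDe
    rw [Finset.not_nonempty_iff_eq_empty, hD, Finset.sdiff_eq_empty_iff_subset] at hDe
    apply hnc
    refine ⟨⟨c₀, hc₀CP⟩, ?_⟩
    intro a ha b hb
    obtain ⟨-, hra⟩ := (hAchar a).1 (hDe ha)
    obtain ⟨-, hrb⟩ := (hAchar b).1 (hDe hb)
    exact hra.symm.trans hrb
  have hDH : D ⊆ H := by
    intro w hw
    obtain ⟨hw1, hw2⟩ := Finset.mem_sdiff.1 hw
    by_contra hwH
    exact hw2 (hCHA w (Finset.mem_sdiff.2 ⟨(Finset.mem_sdiff.1 hw1).1, hwH⟩))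
  have hDpos : ∀ c ∈ D, 0 < c.2.2 := fun c hc => hHpos c (hDH hc)
  have hDC : D ⊆ C := fun c hc => (Finset.mem_sdiff.1 ((Finset.mem_sdiff.1 hc).1)).1
  have htopC : ((x, y, zt + 1) : Cube) ∉ C := by
    intro hmem
    apply hPt
    refine hH.2.2 (x, y, zt) (hPH (mem_pillarSet'.2 ⟨rfl, rfl, hzbzt, le_refl _⟩))
      (x, y, zt + 1) (Finset.mem_filter.2 ⟨hmem, by dsimp only; omega⟩) ?_
    unfold cubeAdj; dsimp only; omega
  have hbotC : ((x, y, zb - 1) : Cube) ∈ C → zb = 1 := by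
    intro hmem
    by_contra hne
    apply hPb
    refine hH.2.2 (x, y, zb) (hPH (mem_pillarSet'.2 ⟨rfl, rfl, le_refl _, hzbzt⟩))
      (x, y, zb - 1) (Finset.mem_filter.2 ⟨hmem, by dsimp only; omega⟩) ?_
    unfold cubeAdj; dsimp only; omega
  have hDcl : ∀ e ∈ D, ∀ w : Cube, w ∈ C → w.1 = e.1 → w.2.1 = e.2.1 →
      (w.2.2 - e.2.2).natAbs = 1 → w ∈ D := by
    intro e he w hwC hw1 hw2 hw3
    obtain ⟨heCP, heA⟩ := Finset.mem_sdiff.1 he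
    obtain ⟨heC, heP⟩ := Finset.mem_sdiff.1 heCP
    have hadj : cubeAdj w e := by unfold cubeAdj; omega
    have hwP : w ∉ pillarSet x y zb zt := by
      intro hwP
      obtain ⟨ex, ey, ez⟩ := e
      obtain ⟨wx, wy, wz⟩ := w
      obtain ⟨hwx, hwy, hwz1, hwz2⟩ := mem_pillarSet'.1 hwP
      dsimp only at hw1 hw2 hw3
      have hezpos : 0 < ez := hDpos _ he
      have heP' : ¬ (ex = x ∧ ey = y ∧ zb ≤ ez ∧ ez ≤ zt) :=
        fun hh => heP (mem_pillarSet'.2 hh)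
      have hex : ex = x := by omega
      have hey : ey = y := by omega
      have hez : ez = zb - 1 ∨ ez = zt + 1 := by omega
      rcases hez with hez | hez
      · rw [hex, hey, hez] at heC
        have := hbotC heC
        omega
      · rw [hex, hey, hez] at heC
        exact htopC heC
    refine Finset.mem_sdiff.2 ⟨Finset.mem_sdiff.2 ⟨hwC, hwP⟩, ?_⟩
    intro hwA
    exact heA (class_closed hAchar hwA heCP hadj)
  by_cases hadjPA : ∃ p' ∈ pillarSet x y zb zt, ∃ a' ∈ A, cubeAdj p' a'
  · -- P attaches to A : recurse on E = D
    have hsetEq : C \ D = A ∪ pillarSet x y zb zt := by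
      ext c
      constructor
      · intro hcmem
        obtain ⟨hcC, hcD⟩ := Finset.mem_sdiff.1 hcmem
        by_cases hcP : c ∈ pillarSet x y zb zt
        · exact Finset.mem_union_right _ hcP
        · refine Finset.mem_union_left _ ?_
          by_contra hcA
          exact hcD (Finset.mem_sdiff.2 ⟨Finset.mem_sdiff.2 ⟨hcC, hcP⟩, hcA⟩)
      · intro hcmem
        rcases Finset.mem_union.1 hcmem with h | h
        · have hcCP := ((hAchar c).1 h).1
          refine Finset.mem_sdiff.2 ⟨(Finset.mem_sdiff.1 hcCP).1, ?_⟩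
          intro hcD
          exact (Finset.mem_sdiff.1 hcD).2 h
        · refine Finset.mem_sdiff.2 ⟨hPC h, ?_⟩
          intro hcD
          exact (Finset.mem_sdiff.1 (Finset.mem_sdiff.1 hcD).1).2 h
    obtain ⟨p', hp', a', ha', hadj'⟩ := hadjPA
    have hconnCD : Conn (C \ D) := by
      rw [hsetEq]
      exact conn_glue (conn_class hc₀CP hAchar) (conn_pillarSet hzbzt) ha' hp'
        (cubeAdj_symm hadj')
    obtain ⟨u, v, qb, qt, hQp, hQsubD, hQconn⟩ :=
      key_noncut C hC hN D.card D (le_refl _) hDC hDne hDcl hconnCD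
    have hqbpos : 0 < qb := by
      have := hDpos _ (hQsubD (mem_pillarSet'.2 ⟨rfl, rfl, le_refl _, hQp.1.1⟩))
      exact this
    exact final_contra C hC hN hae hQp hqbpos hQconn
  · -- P attaches only to D : recurse on E = D ∪ P
    have hsetEq : C \ (D ∪ pillarSet x y zb zt) = A := by
      ext c
      constructor
      · intro hcmem
        obtain ⟨hcC, hcDP⟩ := Finset.mem_sdiff.1 hcmem
        rw [Finset.mem_union, not_or] at hcDP
        obtain ⟨hcD, hcP⟩ := hcDP
        by_contra hcA
        exact hcD (Finset.mem_sdiff.2 ⟨Finset.mem_sdiff.2 ⟨hcC, hcP⟩, hcA⟩)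
      · intro hcA
        have hcCP := ((hAchar c).1 hcA).1
        refine Finset.mem_sdiff.2 ⟨(Finset.mem_sdiff.1 hcCP).1, ?_⟩
        rw [Finset.mem_union, not_or]
        refine ⟨fun hcD => (Finset.mem_sdiff.1 hcD).2 hcA, (Finset.mem_sdiff.1 hcCP).2⟩
    have hconnCE : Conn (C \ (D ∪ pillarSet x y zb zt)) := by
      rw [hsetEq]
      exact conn_class hc₀CP hAchar
    have hEC : D ∪ pillarSet x y zb zt ⊆ C := Finset.union_subset hDC hPC
    have hEne : (D ∪ pillarSet x y zb zt).Nonempty := by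
      obtain ⟨d, hd⟩ := hDne
      exact ⟨d, Finset.mem_union_left _ hd⟩
    have hEpos : ∀ c ∈ D ∪ pillarSet x y zb zt, 0 < c.2.2 := by
      intro c hc
      rcases Finset.mem_union.1 hc with h | h
      · exact hDpos c h
      · exact hHpos c (hPH h)
    have hEcl : ∀ e ∈ D ∪ pillarSet x y zb zt, ∀ w : Cube, w ∈ C → w.1 = e.1 →
        w.2.1 = e.2.1 → (w.2.2 - e.2.2).natAbs = 1 → w ∈ D ∪ pillarSet x y zb zt := by
      intro e he w hwC hw1 hw2 hw3
      rcases Finset.mem_union.1 he with he' | he'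
      · exact Finset.mem_union_left _ (hDcl e he' w hwC hw1 hw2 hw3)
      · obtain ⟨ex, ey, ez⟩ := e
        obtain ⟨wx, wy, wz⟩ := w
        obtain ⟨hex, hey, hez1, hez2⟩ := mem_pillarSet'.1 he'
        dsimp only at hw1 hw2 hw3
        by_cases hwrange : zb ≤ wz ∧ wz ≤ zt
        · exact Finset.mem_union_right _
            (mem_pillarSet'.2 ⟨by omega, by omega, hwrange.1, hwrange.2⟩)
        · exfalso
          have hwz : wz = zb - 1 ∨ wz = zt + 1 := by omega
          rcases hwz with hwz | hwz
          · have hwC' : ((x, y, zb - 1) : Cube) ∈ C := by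
              rw [show ((x, y, zb - 1) : Cube) = (wx, wy, wz) by
                have h1 : wx = x := by omega
                have h2 : wy = y := by omega
                rw [h1, h2, hwz]]
              exact hwC
            have hzb1' : zb = 1 := hbotC hwC'
            -- w = (x,y,0) ∈ C \ H ⊆ A, adjacent to e ∈ P : contradiction with hadjPA
            apply hadjPA
            have hwH : (wx, wy, wz) ∉ H := by
              intro hwH
              have := hHpos _ hwH
              dsimp only at this
              omega
            have hwA : ((wx, wy, wz) : Cube) ∈ A :=
              hCHA _ (Finset.mem_sdiff.2 ⟨hwC, hwH⟩)
            exact ⟨(ex, ey, ez), he', (wx, wy, wz), hwA, by unfold cubeAdj; dsimp only; omega⟩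
          · have hwC' : ((x, y, zt + 1) : Cube) ∈ C := by
              rw [show ((x, y, zt + 1) : Cube) = (wx, wy, wz) by
                have h1 : wx = x := by omega
                have h2 : wy = y := by omega
                rw [h1, h2, hwz]]
              exact hwC
            exact htopC hwC'
    obtain ⟨u, v, qb, qt, hQp, hQsubE, hQconn⟩ :=
      key_noncut C hC hN (D ∪ pillarSet x y zb zt).card _ (le_refl _) hEC hEne hEcl hconnCE
    have hqbpos : 0 < qb := by
      have := hEpos _ (hQsubE (mem_pillarSet'.2 ⟨rfl, rfl, le_refl _, hQp.1.1⟩))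
      exact this
    exact final_contra C hC hN hae hQp hqbpos hQconn


/-- Lemma 5: if no non-cut subpillar of `C` satisfies (a)--(e) and no
move of type (f) exists, and `H` is a high component with `C ∖ H` connected, then
every pillar of `H` is a non-cut subpillar of `C`. -/
theorem high_component_pillars_noncut (C : Finset Cube) (hC : Conn C) (hN : Nonneg C)
    (hcard : 2 ≤ C.card) (hunf : ¬ (∀ c ∈ C, FinishedCube C c))
    (hae : NoCondAE C) (hf : ¬ MoveTypeF C)
    (H : Finset Cube) (hH : IsHighComp C H) (hconn : Conn (C \ H)) :
    ∀ x y zb zt, IsPillar H x y zb zt → Conn (C \ pillarSet x y zb zt) := by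
  exact main_result C hC hN hae H hH hconn
end

section
/- Let C be a nonnegative configuration. Every high component of C that contains a finished cube of C also contains the cube (0,0,1); consequently, at most one high component of C contains a finished cube. -/
lemma walk_closed {S A B : Finset Cube} (hA : A ⊆ S) (hB : IsCompOf S B) :
    ∀ {a b : Cube}, (gph A).Walk a b → a ∈ B → b ∈ B := by
  intro a b w
  induction w with
  | nil => exact id
  | cons e _ ih => exact fun haB => ih (hB.2.2 _ haB _ (hA e.2.1) e.2.2)

lemma comp_eq {S H₁ H₂ : Finset Cube} (h1 : IsCompOf S H₁) (h2 : IsCompOf S H₂)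
    {x : Cube} (hx1 : x ∈ H₁) (hx2 : x ∈ H₂) : H₁ = H₂ := by
  apply Finset.Subset.antisymm
  · intro b hb
    obtain ⟨w⟩ := h1.2.1.2 x hx1 b hb
    exact walk_closed h1.1 h2 w hx2
  · intro b hb
    obtain ⟨w⟩ := h2.2.1.2 x hx2 b hb
    exact walk_closed h2.1 h1 w hx1

set_option maxHeartbeats 1000000 in
/-- Corollary: any high component containing a finished cube
contains `(0,0,1)`; hence at most one high component contains a finished cube. -/
theorem high_component_with_finished_cube (C : Finset Cube) (hN : Nonneg C) :
    (∀ H, IsHighComp C H → (∃ c ∈ H, FinishedCube C c) →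
      ((0 : ℤ), (0 : ℤ), (1 : ℤ)) ∈ H) ∧
    (∀ H₁ H₂, IsHighComp C H₁ → IsHighComp C H₂ →
      (∃ c ∈ H₁, FinishedCube C c) → (∃ c ∈ H₂, FinishedCube C c) → H₁ = H₂) := by

  have key : ∀ H, IsHighComp C H → (∃ c ∈ H, FinishedCube C c) →
      ((0 : ℤ), (0 : ℤ), (1 : ℤ)) ∈ H := by
    rintro H hH ⟨⟨cx, cy, cz⟩, hcH, hfin⟩
    have hmem := Finset.mem_filter.mp (hH.1 hcH)
    have hcC : ((cx, cy, cz) : Cube) ∈ C := hmem.1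
    have hz : 0 < cz := hmem.2
    have hx : 0 ≤ cx := (hN _ hcC).1
    have hy : 0 ≤ cy := (hN _ hcC).2.1
    have memH : ∀ a ∈ H, ∀ b : Cube, b ∈ C → 0 < b.2.2 → cubeAdj a b → b ∈ H := by
      intro a ha b hbC hbz hadj
      exact hH.2.2 a ha b (Finset.mem_filter.mpr ⟨hbC, hbz⟩) hadj
    have step1 : ∀ k : ℕ, (k : ℤ) ≤ cx → ((cx - k, cy, cz) : Cube) ∈ H := by
      intro k
      induction k with
      | zero => intro _; simpa using hcH
      | succ n ih =>
        intro hn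
        refine memH _ (ih (by omega)) _ ?_ hz ?_
        · exact hfin (cx - ((n : ℤ) + 1), cy, cz)
            (show (0:ℤ) ≤ cx - ((n : ℤ) + 1) by omega)
            (show cx - ((n : ℤ) + 1) ≤ cx by omega) hy le_rfl (le_of_lt hz) le_rfl
        · show cubeAdj (cx - (n : ℤ), cy, cz) (cx - ((n : ℤ) + 1), cy, cz)
          simp only [cubeAdj]
          omega
    have h1 : ((0, cy, cz) : Cube) ∈ H := by
      have := step1 cx.toNat (by omega)
      rwa [show cx - (cx.toNat : ℤ) = 0 by omega] at this
    have step2 : ∀ k : ℕ, (k : ℤ) ≤ cy → ((0, cy - k, cz) : Cube) ∈ H := by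
      intro k
      induction k with
      | zero => intro _; simpa using h1
      | succ n ih =>
        intro hn
        refine memH _ (ih (by omega)) _ ?_ hz ?_
        · exact hfin (0, cy - ((n : ℤ) + 1), cz) le_rfl hx
            (show (0:ℤ) ≤ cy - ((n : ℤ) + 1) by omega)
            (show cy - ((n : ℤ) + 1) ≤ cy by omega) (le_of_lt hz) le_rfl
        · show cubeAdj (0, cy - (n : ℤ), cz) (0, cy - ((n : ℤ) + 1), cz)
          simp only [cubeAdj]
          omega
    have h2 : ((0, 0, cz) : Cube) ∈ H := by
      have := step2 cy.toNat (by omega)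
      rwa [show cy - (cy.toNat : ℤ) = 0 by omega] at this
    have step3 : ∀ k : ℕ, (k : ℤ) ≤ cz - 1 → ((0, 0, cz - k) : Cube) ∈ H := by
      intro k
      induction k with
      | zero => intro _; simpa using h2
      | succ n ih =>
        intro hn
        refine memH _ (ih (by omega)) _ ?_ (by show (0:ℤ) < cz - ((n:ℤ)+1); omega) ?_
        · exact hfin (0, 0, cz - ((n : ℤ) + 1)) le_rfl hx le_rfl hy
            (show (0:ℤ) ≤ cz - ((n : ℤ) + 1) by omega)
            (show cz - ((n : ℤ) + 1) ≤ cz by omega)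
        · show cubeAdj (0, 0, cz - (n : ℤ)) (0, 0, cz - ((n : ℤ) + 1))
          simp only [cubeAdj]
          omega
    have := step3 (cz - 1).toNat (by omega)
    rwa [show cz - ((cz - 1).toNat : ℤ) = 1 by omega] at this
  refine ⟨key, fun H₁ H₂ hH₁ hH₂ hf₁ hf₂ => ?_⟩
  exact comp_eq hH₁ hH₂ (key H₁ hH₁ hf₁) (key H₂ hH₂ hf₂)
end
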